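/- Let H be a Hopf algebra with coproduct Δ, ρ : H → S ⊗ H a coaction satisfying the cointeraction m^{1,3}(ρ ⊗ ρ)Δ = (id ⊗ Δ)ρ with S a commutative bialgebra, ℓ : S → k a character, and M_ℓ := (ℓ ⊗ id)ρ. Let (X_{st}) be characters of H satisfying Chen's identity X_{su} ∗ X_{ut} = X_{st}. Define Γ^ℓ_{st} := (X_{ts} ∘ M_ℓ ⊗ id)Δ. Then Γ^ℓ_{xy} Γ^ℓ_{yz} = Γ^ℓ_{xz} for all x, y, z. -/

import Mathlib

set_option autoImplicit false

open TensorProduct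

/-- Convolution of linear functionals on a coalgebra: `(f ∗ g)(x) = (f ⊗ g)(Δ x)`. -/
noncomputable def convF (k H : Type*) [CommRing k] [AddCommGroup H] [Module k H]
    [Coalgebra k H] (f g : H →ₗ[k] k) : H →ₗ[k] k :=
  TensorProduct.lift (((LinearMap.mul k k).comp f).compl₂ g) ∘ₗ
    Coalgebra.comul (R := k) (A := H)

/-- `Γ_g = (g ⊗ id) ∘ Δ` for a linear functional `g` on a coalgebra. -/
noncomputable def GammaF (k H : Type*) [CommRing k] [AddCommGroup H] [Module k H]
    [Coalgebra k H] (g : H →ₗ[k] k) : H →ₗ[k] H :=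
  (TensorProduct.lid k H).toLinearMap ∘ₗ TensorProduct.map g LinearMap.id ∘ₗ
    Coalgebra.comul (R := k) (A := H)

/-- `M_ℓ = (ℓ ⊗ id) ∘ ρ`, the renormalisation map attached to a coaction `ρ` and a
character `ℓ`. -/
noncomputable def Ml (k H S : Type*) [CommRing k] [AddCommGroup H] [Module k H]
    [CommRing S] [Algebra k S] (ρ : H →ₗ[k] S ⊗[k] H) (ℓ : S →ₐ[k] k) : H →ₗ[k] H :=
  (TensorProduct.lid k H).toLinearMap ∘ₗ TensorProduct.map ℓ.toLinearMap LinearMap.id ∘ₗ ρ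

/-!
By coassociativity, composing the maps `Γ_g = (g ⊗ id)Δ` corresponds to convolving the
functionals: `Γ_f Γ_g = Γ_{g ∗ f}`. The cointeraction, together with multiplicativity of `ℓ`,
makes `M_ℓ` comultiplicative, `Δ M_ℓ = (M_ℓ ⊗ M_ℓ)Δ`, so precomposition with `M_ℓ` respects `∗`.
Hence `Γ^ℓ_{xy} Γ^ℓ_{yz} = Γ_{(X_{zy} ∗ X_{yx}) ∘ M_ℓ}`, which is `Γ^ℓ_{xz}` by Chen's identity.
-/

section Coalgebra

variable {k H : Type*} [CommRing k] [AddCommGroup H] [Module k H] [Coalgebra k H]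

lemma convF_eq_mul'_comp (f g : H →ₗ[k] k) :
    convF k H f g = LinearMap.mul' k k ∘ₗ TensorProduct.map f g ∘ₗ Coalgebra.comul := by
  rw [convF, ← LinearMap.comp_assoc]
  congr 1
  exact TensorProduct.ext' fun a b => by simp

theorem gammaF_comp_gammaF (f g : H →ₗ[k] k) :
    GammaF k H f ∘ₗ GammaF k H g = GammaF k H (convF k H g f) := by
  let ϕ := (TensorProduct.lid k H).toLinearMap ∘ₗ map f LinearMap.id
  have hassoc : (TensorProduct.lid k H).toLinearMap ∘ₗ map g ϕ ∘ₗ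
      (TensorProduct.assoc k H H H).toLinearMap =
        (TensorProduct.lid k H).toLinearMap ∘ₗ map (LinearMap.mul' k k ∘ₗ map g f) LinearMap.id :=
    TensorProduct.ext_threefold fun a b c => by simp [ϕ, smul_smul, mul_comm]
  calc GammaF k H f ∘ₗ GammaF k H g
      = (TensorProduct.lid k H).toLinearMap ∘ₗ map g (ϕ ∘ₗ Coalgebra.comul) ∘ₗ
          Coalgebra.comul := by
        rw [CoassocSimps.lid_comp_map_assoc]; rfl
    _ = ((TensorProduct.lid k H).toLinearMap ∘ₗ map g ϕ ∘ₗ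
          (TensorProduct.assoc k H H H).toLinearMap) ∘ₗ
            Coalgebra.comul.rTensor H ∘ₗ Coalgebra.comul := by
        simp only [LinearMap.comp_assoc, Coalgebra.coassoc, ← LinearMap.map_comp_lTensor]
    _ = GammaF k H (convF k H g f) := by
        rw [hassoc, convF_eq_mul'_comp, GammaF, LinearMap.comp_assoc,
          ← LinearMap.comp_assoc Coalgebra.comul, LinearMap.map_comp_rTensor, LinearMap.comp_assoc]

end Coalgebra

theorem convF_comp_of_comul_comp {k C D : Type*} [CommRing k] [AddCommGroup C] [Module k C]
    [Coalgebra k C] [AddCommGroup D] [Module k D] [Coalgebra k D] (φ : C →ₗ[k] D)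
    (hφ : Coalgebra.comul ∘ₗ φ = map φ φ ∘ₗ Coalgebra.comul) (f g : D →ₗ[k] k) :
    convF k C (f ∘ₗ φ) (g ∘ₗ φ) = convF k D f g ∘ₗ φ := by
  simp only [convF_eq_mul'_comp, LinearMap.comp_assoc, hφ, TensorProduct.map_comp]

theorem comul_comp_Ml {k H S : Type*} [CommRing k] [AddCommGroup H] [Module k H] [Coalgebra k H]
    [CommRing S] [Algebra k S] (ρ : H →ₗ[k] S ⊗[k] H)
    (hcointer : ∀ x : H,
      (TensorProduct.map (LinearMap.mul' k S) LinearMap.id)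
        ((TensorProduct.tensorTensorTensorComm k S H S H)
          ((TensorProduct.map ρ ρ) (Coalgebra.comul (R := k) x)))
      = (TensorProduct.map LinearMap.id (Coalgebra.comul (R := k) (A := H))) (ρ x))
    (ℓ : S →ₐ[k] k) :
    Coalgebra.comul ∘ₗ Ml k H S ρ ℓ = map (Ml k H S ρ ℓ) (Ml k H S ρ ℓ) ∘ₗ Coalgebra.comul := by
  let L : S ⊗[k] H →ₗ[k] H :=
    (TensorProduct.lid k H).toLinearMap ∘ₗ map ℓ.toLinearMap LinearMap.id
  let L₂ : S ⊗[k] (H ⊗[k] H) →ₗ[k] H ⊗[k] H :=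
    (TensorProduct.lid k (H ⊗[k] H)).toLinearMap ∘ₗ map ℓ.toLinearMap LinearMap.id
  have hcomul : Coalgebra.comul ∘ₗ L = L₂ ∘ₗ map LinearMap.id Coalgebra.comul :=
    TensorProduct.ext' fun s h => by simp [L, L₂]
  have hmul : L₂ ∘ₗ map (LinearMap.mul' k S) LinearMap.id ∘ₗ
      (TensorProduct.tensorTensorTensorComm k S H S H).toLinearMap = map L L :=
    TensorProduct.ext_fourfold' fun s h s' h' => by
      simp [L, L₂, TensorProduct.smul_tmul', smul_smul, mul_comm]
  ext x
  calc Coalgebra.comul (L (ρ x)) = L₂ (map LinearMap.id Coalgebra.comul (ρ x)) :=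
        LinearMap.congr_fun hcomul (ρ x)
    _ = map L L (map ρ ρ (Coalgebra.comul x)) := by
        rw [← hcointer, ← hmul]; rfl
    _ = map (L ∘ₗ ρ) (L ∘ₗ ρ) (Coalgebra.comul x) :=
        TensorProduct.map_map ..

theorem stmt_10_general (k H S : Type*) [CommRing k] [Ring H] [Bialgebra k H]
    [CommRing S] [Bialgebra k S]
    (ρ : H →ₗ[k] S ⊗[k] H)
    (hcointer : ∀ x : H,
      (TensorProduct.map (LinearMap.mul' k S) LinearMap.id)
        ((TensorProduct.tensorTensorTensorComm k S H S H)
          ((TensorProduct.map ρ ρ) (Coalgebra.comul (R := k) x)))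
      = (TensorProduct.map LinearMap.id (Coalgebra.comul (R := k) (A := H))) (ρ x))
    (ℓ : S →ₐ[k] k)
    (X : ℝ → ℝ → (H →ₐ[k] k))
    (chen : ∀ s u t : ℝ,
      convF k H (X s u).toLinearMap (X u t).toLinearMap = (X s t).toLinearMap) :
    ∀ x y z : ℝ,
      (GammaF k H ((X y x).toLinearMap ∘ₗ Ml k H S ρ ℓ)) ∘ₗ
          (GammaF k H ((X z y).toLinearMap ∘ₗ Ml k H S ρ ℓ))
        = GammaF k H ((X z x).toLinearMap ∘ₗ Ml k H S ρ ℓ) := by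
  intro x y z
  rw [gammaF_comp_gammaF, convF_comp_of_comul_comp _ (comul_comp_Ml ρ hcointer ℓ), chen]

/-- The renormalised recentering maps `Γ^ℓ_{st} := (X_{ts} ∘ M_ℓ ⊗ id)Δ` again satisfy
the group property `Γ^ℓ_{xy} Γ^ℓ_{yz} = Γ^ℓ_{xz}`, given the cointeraction of the
coaction `ρ` with the coproduct `Δ`, a character `ℓ` of the commutative bialgebra `S`,
and Chen's identity for the characters `X_{st}` of `H`. -/
theorem stmt_10 (k H S : Type*) [CommRing k] [Ring H] [Bialgebra k H] [HopfAlgebra k H]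
    [CommRing S] [Bialgebra k S]
    (ρ : H →ₗ[k] S ⊗[k] H)
    (hcoassoc : ∀ x : H, (TensorProduct.assoc k S S H)
        ((TensorProduct.map (Coalgebra.comul (R := k) (A := S)) LinearMap.id) (ρ x))
      = (TensorProduct.map LinearMap.id ρ) (ρ x))
    (hcounit : ∀ x : H, (TensorProduct.lid k H)
        ((TensorProduct.map (Coalgebra.counit (R := k) (A := S)) LinearMap.id) (ρ x)) = x)
    (hcointer : ∀ x : H,
      (TensorProduct.map (LinearMap.mul' k S) LinearMap.id)
        ((TensorProduct.tensorTensorTensorComm k S H S H)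
          ((TensorProduct.map ρ ρ) (Coalgebra.comul (R := k) x)))
      = (TensorProduct.map LinearMap.id (Coalgebra.comul (R := k) (A := H))) (ρ x))
    (ℓ : S →ₐ[k] k)
    (X : ℝ → ℝ → (H →ₐ[k] k))
    (chen : ∀ s u t : ℝ,
      convF k H (X s u).toLinearMap (X u t).toLinearMap = (X s t).toLinearMap) :
    ∀ x y z : ℝ,
      (GammaF k H ((X y x).toLinearMap ∘ₗ Ml k H S ρ ℓ)) ∘ₗ
          (GammaF k H ((X z y).toLinearMap ∘ₗ Ml k H S ρ ℓ))
        = GammaF k H ((X z x).toLinearMap ∘ₗ Ml k H S ρ ℓ) :=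
  stmt_10_general k H S ρ hcointer ℓ X chen
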